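/- arXiv:2109.09588 — 3 statements merged into one kernel-verified Lean document; each statement's English description precedes it below -/
import Mathlib

section
/- Let T be a rooted tree with n vertices and let δ ≥ 1. Call a vertex v of T black if (i) the depth of v is a multiple of δ and (ii) the subtree of T rooted at v has height at least δ−1. Then the number of black vertices of T is at most n/δ. -/
/-- `u` is an ancestor of `v` (reachable by iterating the parent map). -/
def isAnc (parent : ℕ → ℕ) (u v : ℕ) : Prop := ∃ k, parent^[k] v = u

/-- The subtree of the tree on `{0,…,n-1}` rooted at `v` has height at least `h`:
some vertex `u` of the tree in the subtree of `v` has depth at least `dep v + h`. -/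
def heightGe (parent dep : ℕ → ℕ) (n v h : ℕ) : Prop :=
  ∃ u, u < n ∧ isAnc parent v u ∧ dep v + h ≤ dep u

/-- `v` is black: its depth is a multiple of `δ` and its subtree has height ≥ `δ - 1`. -/
def isBlack (parent dep : ℕ → ℕ) (n δ v : ℕ) : Prop :=
  dep v % δ = 0 ∧ heightGe parent dep n v (δ - 1)

/-- Arithmetic helper: if `a` and `b` are multiples of `δ` and `a + i = b + j`
with `i, j < δ`, then `a = b`. -/
lemma block_eq (δ a b i j : ℕ) (hδ : 0 < δ) (ha : a % δ = 0) (hb : b % δ = 0)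
    (hi : i < δ) (hj : j < δ) (h : a + i = b + j) : a = b := by
  obtain ⟨x, hx⟩ := Nat.dvd_of_mod_eq_zero ha
  obtain ⟨y, hy⟩ := Nat.dvd_of_mod_eq_zero hb
  subst hx hy
  rcases Nat.lt_trichotomy x y with h' | h' | h'
  · have : δ * (x + 1) ≤ δ * y := Nat.mul_le_mul_left δ h'
    rw [Nat.mul_add, Nat.mul_one] at this
    omega
  · rw [h']
  · have : δ * (y + 1) ≤ δ * x := Nat.mul_le_mul_left δ h'
    rw [Nat.mul_add, Nat.mul_one] at this
    omega

open scoped Classical in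
/-- the number of black vertices of a rooted tree with `n` vertices
is at most `n / δ`. -/
theorem black_count_le (n δ : ℕ) (parent dep : ℕ → ℕ)
    (hδ : 1 ≤ δ) (hn : 0 < n)
    (hroot : parent 0 = 0)
    (hpar : ∀ v, 0 < v → v < n → parent v < v)
    (hdep0 : dep 0 = 0)
    (hdep : ∀ v, 0 < v → v < n → dep v = dep (parent v) + 1) :
    ((Finset.range n).filter (fun v => isBlack parent dep n δ v)).card ≤ n / δ := by
  classical
  -- basic facts about iterated parents
  have key : ∀ v, v < n → ∀ k, parent^[k] v < n ∧ dep (parent^[k] v) = dep v - k := by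
    intro v hv k
    induction k with
    | zero => simpa using hv
    | succ k ih =>
      obtain ⟨h1, h2⟩ := ih
      rw [Function.iterate_succ_apply']
      by_cases hw : parent^[k] v = 0
      · rw [hw, hroot]
        have : dep v - k = 0 := by rw [← h2, hw, hdep0]
        constructor
        · exact hn
        · rw [hdep0]; omega
      · have hw0 : 0 < parent^[k] v := Nat.pos_of_ne_zero hw
        have hp := hpar _ hw0 h1
        have hd := hdep _ hw0 h1
        constructor
        · omega
        · omega
  -- depth zero means root
  have dep0 : ∀ v, v < n → dep v = 0 → v = 0 := by
    intro v hv h0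
    by_contra hne
    have := hdep v (Nat.pos_of_ne_zero hne) hv
    omega
  -- uniqueness of ancestor at a given depth
  have anc_unique : ∀ u, u < n → ∀ k k', dep (parent^[k] u) = dep (parent^[k'] u) →
      parent^[k] u = parent^[k'] u := by
    intro u hu k k' hd
    obtain ⟨hk1, hk2⟩ := key u hu k
    obtain ⟨hk1', hk2'⟩ := key u hu k'
    by_cases h : k ≤ dep u ∧ k' ≤ dep u
    · have : k = k' := by omega
      rw [this]
    · have h0 : dep (parent^[k] u) = 0 ∧ dep (parent^[k'] u) = 0 := by omega
      rw [dep0 _ hk1 h0.1, dep0 _ hk1' h0.2]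
  -- transitivity: a shallower ancestor of u is an ancestor of a deeper one
  have anc_trans : ∀ u, u < n → ∀ k j, dep (parent^[k] u) ≤ dep (parent^[j] u) →
      ∃ m, parent^[m] (parent^[j] u) = parent^[k] u := by
    intro u hu k j hle
    refine ⟨dep (parent^[j] u) - dep (parent^[k] u), ?_⟩
    rw [← Function.iterate_add_apply]
    apply anc_unique u hu
    obtain ⟨h1, h2⟩ := key u hu k
    obtain ⟨h1', h2'⟩ := key u hu j
    obtain ⟨h1'', h2''⟩ := key u hu (dep (parent^[j] u) - dep (parent^[k] u) + j)
    omega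
  -- choose witnesses
  have hex : ∀ v, ∃ u, isBlack parent dep n δ v →
      u < n ∧ isAnc parent v u ∧ dep v + (δ - 1) ≤ dep u := by
    intro v
    by_cases hb : isBlack parent dep n δ v
    · obtain ⟨u, hu⟩ := hb.2
      exact ⟨u, fun _ => hu⟩
    · exact ⟨0, fun h => absurd h hb⟩
  choose u hu using hex
  set B := (Finset.range n).filter (fun v => isBlack parent dep n δ v) with hB
  have hBmem : ∀ v ∈ B, v < n ∧ isBlack parent dep n δ v := by
    intro v hv
    simp only [hB, Finset.mem_filter, Finset.mem_range] at hv
    exact hv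
  -- witness sets
  set W : ℕ → Finset ℕ :=
    fun v => (Finset.range δ).image (fun i => parent^[dep (u v) - dep v - i] (u v)) with hW
  -- description of members of W v
  have hWmem : ∀ v ∈ B, ∀ w ∈ W v, w < n ∧ ∃ i < δ, dep w = dep v + i ∧
      ∃ m, parent^[m] (u v) = w := by
    intro v hv w hw
    obtain ⟨_, hblack⟩ := hBmem v hv
    obtain ⟨hun, hanc, hdepu⟩ := hu v hblack
    simp only [hW, Finset.mem_image, Finset.mem_range] at hw
    obtain ⟨i, hi, hwi⟩ := hw
    obtain ⟨h1, h2⟩ := key (u v) hun (dep (u v) - dep v - i)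
    constructor
    · rw [← hwi]; exact h1
    refine ⟨i, hi, ?_, dep (u v) - dep v - i, hwi⟩
    rw [← hwi]
    omega
  -- v is an ancestor of each member of W v
  have hvanc : ∀ v ∈ B, ∀ w ∈ W v, ∃ m, parent^[m] w = v := by
    intro v hv w hw
    obtain ⟨_, hblack⟩ := hBmem v hv
    obtain ⟨hun, hanc, hdepu⟩ := hu v hblack
    obtain ⟨hwn, i, hi, hdw, m, hm⟩ := hWmem v hv w hw
    obtain ⟨k, hk⟩ := hanc
    have := anc_trans (u v) hun k m (by rw [hk, hm]; omega)
    obtain ⟨s, hs⟩ := this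
    rw [hm, hk] at hs
    exact ⟨s, hs⟩
  -- cardinality of each W v is δ
  have hWcard : ∀ v ∈ B, (W v).card = δ := by
    intro v hv
    obtain ⟨_, hblack⟩ := hBmem v hv
    obtain ⟨hun, hanc, hdepu⟩ := hu v hblack
    rw [hW]
    rw [Finset.card_image_of_injOn, Finset.card_range]
    intro i hi j hj hij
    simp only [Finset.mem_coe, Finset.mem_range] at hi hj
    simp only at hij
    have h1 := (key (u v) hun (dep (u v) - dep v - i)).2
    have h2 := (key (u v) hun (dep (u v) - dep v - j)).2
    rw [hij] at h1
    omega
  -- pairwise disjointness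
  have hdisj : (B : Set ℕ).PairwiseDisjoint W := by
    intro v hv v' hv' hne
    simp only [Finset.mem_coe] at hv hv'
    simp only [Function.onFun]
    rw [Finset.disjoint_left]
    intro w hwv hwv'
    obtain ⟨hwn, i, hi, hdw, _⟩ := hWmem v hv w hwv
    obtain ⟨_, i', hi', hdw', _⟩ := hWmem v' hv' w hwv'
    have hblack := (hBmem v hv).2
    have hblack' := (hBmem v' hv').2
    have hdveq : dep v = dep v' :=
      block_eq δ (dep v) (dep v') i i' hδ hblack.1 hblack'.1 hi hi' (by omega)
    obtain ⟨m, hm⟩ := hvanc v hv w hwv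
    obtain ⟨m', hm'⟩ := hvanc v' hv' w hwv'
    apply hne
    rw [← hm, ← hm']
    apply anc_unique w hwn
    rw [hm, hm', hdveq]
  -- put it together
  have hsub : B.biUnion W ⊆ Finset.range n := by
    intro w hw
    obtain ⟨v, hv, hwv⟩ := Finset.mem_biUnion.mp hw
    exact Finset.mem_range.mpr (hWmem v hv w hwv).1
  have hcard : (B.biUnion W).card = B.card * δ := by
    rw [Finset.card_biUnion hdisj]
    rw [Finset.sum_congr rfl hWcard, Finset.sum_const, smul_eq_mul]
  have : B.card * δ ≤ n := by
    rw [← hcard]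
    calc (B.biUnion W).card ≤ (Finset.range n).card := Finset.card_le_card hsub
    _ = n := Finset.card_range n
  exact (Nat.le_div_iff_mul_le hδ).mpr this
end

section
/- Let T be a rooted tree and δ ≥ 1. With the coloring where v is black iff its depth is a multiple of δ and its subtree has height at least δ−1, every vertex v whose depth in T is at least 2δ has a black ancestor at distance at most 2δ from v. -/
/-- every vertex of depth at least `2δ` has a black ancestor
at distance at most `2δ`. -/
theorem black_ancestor_within_two_delta (n δ : ℕ) (parent dep : ℕ → ℕ)
    (hδ : 1 ≤ δ) (hn : 0 < n)
    (hroot : parent 0 = 0)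
    (hpar : ∀ v, 0 < v → v < n → parent v < v)
    (hdep0 : dep 0 = 0)
    (hdep : ∀ v, 0 < v → v < n → dep v = dep (parent v) + 1)
    (v : ℕ) (hv : v < n) (hdepv : 2 * δ ≤ dep v) :
    ∃ k, k ≤ 2 * δ ∧ isBlack parent dep n δ (parent^[k] v) := by
  -- key lemma: iterating parent decreases depth by one while possible
  have key : ∀ j, j ≤ dep v → parent^[j] v < n ∧ dep (parent^[j] v) = dep v - j := by
    intro j hj
    induction j with
    | zero => simpa using hv
    | succ j ih =>
      obtain ⟨hwn, hwd⟩ := ih (le_of_lt (Nat.lt_of_succ_le hj))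
      set w := parent^[j] v with hw
      have hwpos : 0 < w := by
        rcases Nat.eq_zero_or_pos w with h0 | h0
        · exfalso; rw [h0, hdep0] at hwd; omega
        · exact h0
      have hlt := hpar w hwpos hwn
      have hdw := hdep w hwpos hwn
      rw [Function.iterate_succ_apply', ← hw]
      constructor
      · exact lt_trans hlt hwn
      · omega
  set r := dep v % δ with hr
  set q := dep v / δ with hq
  have hqr : δ * q + r = dep v := Nat.div_add_mod _ _
  have hrlt : r < δ := Nat.mod_lt _ hδ
  have hq2 : 2 ≤ q := by nlinarith
  refine ⟨r + δ, by omega, ?_, ?_⟩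
  · obtain ⟨_, hd⟩ := key (r + δ) (by omega)
    rw [hd]
    obtain ⟨q', hq'⟩ : ∃ q', q = q' + 1 := ⟨q - 1, by omega⟩
    rw [hq', Nat.mul_succ] at hqr
    have : dep v - (r + δ) = δ * q' := by omega
    rw [this]
    exact Nat.mul_mod_right _ _
  · obtain ⟨_, hd⟩ := key (r + δ) (by omega)
    have hle : r + δ ≤ dep v := by omega
    refine ⟨v, hv, ⟨r + δ, rfl⟩, ?_⟩
    rw [hd]
    omega
end

section
/- Let T be a rooted tree, δ ≥ 1, with the static coloring (v black iff depth(v) ≡ 0 mod δ and subtree height ≥ δ−1). For every vertex v of depth at least 2δ, the lowest black ancestor v' of v satisfies d_T(v, v') ≤ 2δ and depth(v') ≡ 0 (mod δ). -/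
/-- for every vertex of depth ≥ 2δ, the lowest black ancestor `v'`
of `v` is at distance at most `2δ`, and its depth is a multiple of `δ`. -/
theorem lowest_black_ancestor (n δ : ℕ) (parent dep : ℕ → ℕ)
    (hδ : 1 ≤ δ) (hn : 0 < n)
    (hroot : parent 0 = 0)
    (hpar : ∀ w, 0 < w → w < n → parent w < w)
    (hdep0 : dep 0 = 0)
    (hdep : ∀ w, 0 < w → w < n → dep w = dep (parent w) + 1)
    (v : ℕ) (hv : v < n) (hdepv : 2 * δ ≤ dep v) :
    ∃ d, d ≤ 2 * δ ∧ isBlack parent dep n δ (parent^[d] v) ∧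
      (∀ j, j < d → ¬ isBlack parent dep n δ (parent^[j] v)) ∧
      dep (parent^[d] v) % δ = 0 := by
  classical
  -- iterating the parent stays in the tree and decreases depth by one each step
  have key : ∀ k, k ≤ dep v → parent^[k] v < n ∧ dep (parent^[k] v) = dep v - k := by
    intro k
    induction k with
    | zero => intro _; exact ⟨hv, by simp⟩
    | succ k ih =>
      intro hk
      obtain ⟨hlt, hd⟩ := ih (Nat.le_of_succ_le hk)
      set u := parent^[k] v with hu
      have hdu : 0 < dep u := by omega
      have hu0 : 0 < u := by
        rcases Nat.eq_zero_or_pos u with h | h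
        · rw [h, hdep0] at hdu; omega
        · exact h
      have hpu : parent u < n := lt_trans (hpar u hu0 hlt) hlt
      have : parent^[k+1] v = parent u := by
        rw [Function.iterate_succ_apply', hu]
      rw [this]
      refine ⟨hpu, ?_⟩
      have := hdep u hu0 hlt
      omega
  -- a black ancestor at distance r + δ where r = dep v % δ
  set r := dep v % δ with hr
  have hrδ : r < δ := Nat.mod_lt _ hδ
  have hd0le : r + δ ≤ dep v := by omega
  obtain ⟨hlt0, hd0⟩ := key (r + δ) hd0le
  have hblack0 : isBlack parent dep n δ (parent^[r + δ] v) := by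
    refine ⟨?_, v, hv, ⟨r + δ, rfl⟩, ?_⟩
    · rw [hd0]
      have hq := Nat.div_add_mod (dep v) δ
      have heq : dep v - (r + δ) = δ * (dep v / δ - 1) := by
        rw [Nat.mul_sub]; omega
      rw [heq, Nat.mul_mod_right]
    · rw [hd0]; omega
  have hex : ∃ d, isBlack parent dep n δ (parent^[d] v) := ⟨r + δ, hblack0⟩
  refine ⟨Nat.find hex, ?_, Nat.find_spec hex, fun j hj => Nat.find_min hex hj, ?_⟩
  · exact le_trans (Nat.find_min' hex hblack0) (by omega)
  · exact (Nat.find_spec hex).1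
end
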